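/- Suppose a ≠ 0. Then the quadratic form Q = a·z1² + b·z2² + c·z3² + 2d·z1z2 + 2e·z1z3 + 2f·z2z3 factors as Q = L1·L2 for some degree-one elements L1, L2 of S if and only if there exist X, Y ∈ k with X² = d² − μ12·ab and Y² = e² − μ13·ac such that D8(M) = μ21·(d+X)(e−Y) + μ23μ31·(d−X)(e+Y) − 2af = 0. -/

import Mathlib

/-- `Q = L·L'` in the skew polynomial algebra on three generators (relations
`zj·zi = μij·zi·zj` for `i < j`), expressed via coefficients; here
`L = p.1·z1 + p.2.1·z2 + p.2.2·z3` and `L' = q.1·z1 + q.2.1·z2 + q.2.2·z3`. -/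
def IsFactorization3 {k : Type*} [Field k] (μ12 μ13 μ23 a b c d e f : k)
    (p q : k × k × k) : Prop :=
  p.1 * q.1 = a ∧ p.2.1 * q.2.1 = b ∧ p.2.2 * q.2.2 = c ∧
  p.1 * q.2.1 + μ12 * p.2.1 * q.1 = 2 * d ∧
  p.1 * q.2.2 + μ13 * p.2.2 * q.1 = 2 * e ∧
  p.2.1 * q.2.2 + μ23 * p.2.2 * q.2.1 = 2 * f

/-!
A factorization `Q = L·L'` splits each mixed coefficient into two summands: with
`X := μ12 p₂ q₁ - d` and `Y := μ13 p₃ q₁ - e`, the products `d + X = μ12 p₂ q₁`, `d - X = p₁ q₂`,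
`e + Y = μ13 p₃ q₁`, `e - Y = p₁ q₃` show that `X, Y` are square roots of the required
discriminants, and `D8(M) = p₁ q₁ (p₂ q₃ + μ23 p₃ q₂) - 2af = 0`. Conversely, square roots
`X, Y` prescribe the factors `L = z1 + (d+X)/(μ12 a)·z2 + (e+Y)/(μ13 a)·z3` and
`L' = a·z1 + (d-X)·z2 + (e-Y)·z3`; all coefficients of `L·L'` except the `z2z3` one match
automatically, and that one matches exactly when `D8(M) = 0`.
-/

theorem sub_sq_eq_of_add_eq {R : Type*} [CommRing R] {u v d : R} (h : v + u = 2 * d) :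
    (u - d) ^ 2 = d ^ 2 - u * v := by
  linear_combination u * h

section

variable {k : Type*} [Field k]

theorem div_mul_sub_eq_of_sq_eq {μ a b d X : k} (hμ : μ ≠ 0) (ha : a ≠ 0)
    (hX : X ^ 2 = d ^ 2 - μ * a * b) : (d + X) / (μ * a) * (d - X) = b := by
  field_simp
  linear_combination -hX

def D8 (μ12 μ13 μ23 a d e f X Y : k) : k :=
  μ12⁻¹ * (d + X) * (e - Y) + μ23 * μ13⁻¹ * (d - X) * (e + Y) - 2 * a * f

theorem IsFactorization3.exists_D8_eq_zero {μ12 μ13 μ23 a b c d e f : k} {p q : k × k × k}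
    (hμ12 : μ12 ≠ 0) (hμ13 : μ13 ≠ 0) (h : IsFactorization3 μ12 μ13 μ23 a b c d e f p q) :
    ∃ X Y : k, X ^ 2 = d ^ 2 - μ12 * a * b ∧ Y ^ 2 = e ^ 2 - μ13 * a * c ∧
      D8 μ12 μ13 μ23 a d e f X Y = 0 := by
  obtain ⟨rfl, rfl, rfl, hd, he, hf⟩ := h
  refine ⟨μ12 * p.2.1 * q.1 - d, μ13 * p.2.2 * q.1 - e, ?_, ?_, ?_⟩
  · linear_combination sub_sq_eq_of_add_eq hd
  · linear_combination sub_sq_eq_of_add_eq he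
  · have hdX : d - (μ12 * p.2.1 * q.1 - d) = p.1 * q.2.1 := by linear_combination -hd
    have heY : e - (μ13 * p.2.2 * q.1 - e) = p.1 * q.2.2 := by linear_combination -he
    unfold D8
    rw [hdX, heY, add_sub_cancel, add_sub_cancel]
    field_simp
    linear_combination p.1 * q.1 * hf

theorem isFactorization3_of_D8_eq_zero {μ12 μ13 μ23 a b c d e f X Y : k}
    (hμ12 : μ12 ≠ 0) (hμ13 : μ13 ≠ 0) (ha : a ≠ 0)
    (hX : X ^ 2 = d ^ 2 - μ12 * a * b) (hY : Y ^ 2 = e ^ 2 - μ13 * a * c)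
    (hD : D8 μ12 μ13 μ23 a d e f X Y = 0) :
    IsFactorization3 μ12 μ13 μ23 a b c d e f
      (1, (d + X) / (μ12 * a), (e + Y) / (μ13 * a)) (a, d - X, e - Y) := by
  refine ⟨one_mul a, div_mul_sub_eq_of_sq_eq hμ12 ha hX, div_mul_sub_eq_of_sq_eq hμ13 ha hY,
    ?_, ?_, ?_⟩ <;> dsimp only
  · field_simp
    ring
  · field_simp
    ring
  · unfold D8 at hD
    field_simp at hD ⊢
    linear_combination hD

end

theorem factors_iff_D8_eq_zero_general {k : Type*} [Field k]
    (μ12 μ13 μ23 : k)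
    (hμ12 : μ12 ≠ 0) (hμ13 : μ13 ≠ 0)
    (a b c d e f : k) (ha : a ≠ 0) :
    (∃ p q : k × k × k, IsFactorization3 μ12 μ13 μ23 a b c d e f p q) ↔
      ∃ X Y : k, X ^ 2 = d ^ 2 - μ12 * a * b ∧ Y ^ 2 = e ^ 2 - μ13 * a * c ∧
        μ12⁻¹ * (d + X) * (e - Y) + μ23 * μ13⁻¹ * (d - X) * (e + Y)
          - 2 * a * f = 0 :=
  ⟨fun ⟨_, _, h⟩ => h.exists_D8_eq_zero hμ12 hμ13,
    fun ⟨_, _, hX, hY, hD⟩ => ⟨_, _, isFactorization3_of_D8_eq_zero hμ12 hμ13 ha hX hY hD⟩⟩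

/-- When `a ≠ 0`, the quadratic form
`Q = a·z1² + b·z2² + c·z3² + 2d·z1z2 + 2e·z1z3 + 2f·z2z3` factors as a product
of two degree-one elements if and only if `D8(M) = 0` for some choice of square
roots `X, Y` with `X² = d² − μ12·ab` and `Y² = e² − μ13·ac`, where
`D8(M) = μ21·(d+X)(e−Y) + μ23·μ31·(d−X)(e+Y) − 2af`. -/
theorem factors_iff_D8_eq_zero {k : Type*} [Field k] [IsAlgClosed k]
    (h2 : (2 : k) ≠ 0) (μ12 μ13 μ23 : k)
    (hμ12 : μ12 ≠ 0) (hμ13 : μ13 ≠ 0) (hμ23 : μ23 ≠ 0)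
    (a b c d e f : k) (ha : a ≠ 0) :
    (∃ p q : k × k × k, IsFactorization3 μ12 μ13 μ23 a b c d e f p q) ↔
      ∃ X Y : k, X ^ 2 = d ^ 2 - μ12 * a * b ∧ Y ^ 2 = e ^ 2 - μ13 * a * c ∧
        μ12⁻¹ * (d + X) * (e - Y) + μ23 * μ13⁻¹ * (d - X) * (e + Y)
          - 2 * a * f = 0 :=
  factors_iff_D8_eq_zero_general μ12 μ13 μ23 hμ12 hμ13 a b c d e f ha
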